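/- arXiv:2506.03973 — 2 statements merged into one kernel-verified Lean document; each statement's English description precedes it below -/
import Mathlib

section
/- Let H be a graph and t a non-negative integer. If a graph G has a t-perturbation G~ with no vertex-minor isomorphic to H, then G has no vertex-minor isomorphic to (t+1)H. -/
/-!
Bouchet's lemma: if `X` and `K` are locally equivalent, then each of `K \ v`, `(K * v) \ v` and
`(K ∧ uv) \ v` (for an edge `uv` of `K`) is locally equivalent to one of `X \ v`, `(X * v) \ v`
and `(X ∧ uv) \ v` (for an edge `uv` of `X`). It is proved by pushing the local complementations
that turn `X` into `K`, one at a time, past the deletion of `v`.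

Let `Ĝ` on `V ⊕ Fin t` have `G̃` and `G` as vertex-minors on `V`. Lifting to `Ĝ` the local
complementations that make `(t+1)H` appear in `G`, some graph locally equivalent to `Ĝ` induces
`t + 1` disjoint copies of `H` on `V`, and `G̃` is the restriction to `V` of another one. Delete
the `t` extra vertices one at a time: by Bouchet's lemma, the graph inducing the copies may be
replaced by one of its three deletions of the current vertex `v`. These still induce every copy
but at most one: if the pivot partner `u` lies in a copy, the other copies are untouched; if `v`
has a neighbour `w` in some copy, one more local complementation at `w` (a pivot on `uw` in the
pivot case) repairs all the other copies. So a copy of `H` survives in a graph locally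
equivalent to `G̃`.

Deleting a vertex is modelled by `deleteIncidenceSet`, which isolates it but keeps it in the vertex
type; local complementation at an isolated vertex does nothing.
-/

namespace EP

variable {V W : Type}

/-- Local complementation of `G` at `v`: complement the adjacency between
every pair of distinct neighbours of `v`. -/
def localComp (G : SimpleGraph V) (v : V) : SimpleGraph V where
  Adj x y := x ≠ y ∧
    ((G.Adj v x ∧ G.Adj v y ∧ ¬ G.Adj x y) ∨ (¬(G.Adj v x ∧ G.Adj v y) ∧ G.Adj x y))
  symm := by
    constructor
    intro x y h
    obtain ⟨hxy, h⟩ := h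
    refine ⟨hxy.symm, ?_⟩
    rcases h with ⟨h1, h2, h3⟩ | ⟨h1, h2⟩
    · exact Or.inl ⟨h2, h1, fun h => h3 h.symm⟩
    · exact Or.inr ⟨fun h => h1 ⟨h.2, h.1⟩, h2.symm⟩
  loopless := ⟨fun x h => h.1 rfl⟩

/-- Two graphs on the same vertex set are locally equivalent if one is obtained from
the other by a sequence of local complementations. -/
def LocEquiv (G G' : SimpleGraph V) : Prop :=
  Relation.ReflTransGen (fun A B => ∃ v, B = localComp A v) G G'

/-- `H` is a vertex-minor of `G`, located at the embedding `f`: some graph locally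
equivalent to `G` induces a copy of `H` on the image of `f` (equivalently, `H` is
obtained from `G` by a sequence of local complementations and vertex deletions,
with `f` recording the surviving vertices). -/
def IsVertexMinorAt (G : SimpleGraph V) (H : SimpleGraph W) (f : W ↪ V) : Prop :=
  ∃ G' : SimpleGraph V, LocEquiv G G' ∧ ∀ x y, H.Adj x y ↔ G'.Adj (f x) (f y)

/-- `G` has a vertex-minor isomorphic to `H`. -/
def HasVertexMinor (G : SimpleGraph V) (H : SimpleGraph W) : Prop :=
  ∃ f : W ↪ V, IsVertexMinorAt G H f

/-- `G₁` is a `t`-perturbation of `G₂`: they have the same vertex set `V`, and some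
graph on `|V| + t` vertices contains both of them as vertex-minors (on `V`). -/
def IsPerturbation (t : ℕ) (G₁ G₂ : SimpleGraph V) : Prop :=
  ∃ Gbig : SimpleGraph (V ⊕ Fin t),
    IsVertexMinorAt Gbig G₁ ⟨Sum.inl, Sum.inl_injective⟩ ∧
    IsVertexMinorAt Gbig G₂ ⟨Sum.inl, Sum.inl_injective⟩

/-- The disjoint union of `k` copies of `H`. -/
def copies (k : ℕ) (H : SimpleGraph W) : SimpleGraph (Fin k × W) where
  Adj x y := x.1 = y.1 ∧ H.Adj x.2 y.2
  symm := ⟨fun _ _ h => ⟨h.1.symm, h.2.symm⟩⟩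
  loopless := ⟨fun x h => H.loopless.irrefl x.2 h.2⟩

/-- `G` is a circle graph: its vertices can be assigned chords of a circle
(encoded by pairs of distinct endpoints, all `2|V|` endpoints being distinct) so that
two distinct vertices are adjacent iff their chords cross, i.e. exactly one endpoint
of one chord lies strictly between the two endpoints of the other. -/
def IsCircleGraph (G : SimpleGraph V) : Prop :=
  ∃ a b : V → ℝ,
    (∀ u v, a u = a v → u = v) ∧ (∀ u v, b u = b v → u = v) ∧ (∀ u v, a u ≠ b v) ∧
    ∀ u v, G.Adj u v ↔ u ≠ v ∧
      ¬((min (a u) (b u) < a v ∧ a v < max (a u) (b u)) ↔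
        (min (a u) (b u) < b v ∧ b v < max (a u) (b u)))

/-- `G` is `t`-robust for `H` if every `t`-perturbation of `G` has a vertex-minor
isomorphic to `H`. -/
def Robust (t : ℕ) (G : SimpleGraph V) (H : SimpleGraph W) : Prop :=
  ∀ G' : SimpleGraph V, IsPerturbation t G' G → HasVertexMinor G' H

open Classical in
/-- The cut-rank of `X` in `G`: the rank over `GF(2)` of the `X × Xᶜ` submatrix of the
adjacency matrix of `G`. -/
noncomputable def cutRank [Fintype V] (G : SimpleGraph V) (X : Set V) : ℕ :=
  (Matrix.of fun (x : X) (y : ↥Xᶜ) => if G.Adj x.1 y.1 then (1 : ZMod 2) else 0).rank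

/-- The graph obtained from `G` by deleting all edges with exactly one end in `X`. -/
def cutDelete (G : SimpleGraph V) (X : Set V) : SimpleGraph V where
  Adj x y := G.Adj x y ∧ (x ∈ X ↔ y ∈ X)
  symm := ⟨fun _ _ h => ⟨h.1.symm, h.2.symm⟩⟩
  loopless := ⟨fun x h => G.loopless.irrefl x h.1⟩


local notation:70 G:70 " ⋆ " v:71 => localComp G v

open SimpleGraph Finset Function

section LocalComplementation

theorem localComp_adj (G : SimpleGraph V) (c x y : V) :
    (G ⋆ c).Adj x y ↔ x ≠ y ∧ ¬(G.Adj x y ↔ G.Adj c x ∧ G.Adj c y) := by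
  simp only [localComp]
  tauto

theorem localComp_adj_of_not_adj {G : SimpleGraph V} {c x : V} (h : ¬G.Adj c x) (y : V) :
    (G ⋆ c).Adj x y ↔ G.Adj x y := by
  simp only [localComp_adj, h, false_and, iff_false, not_not, and_iff_right_iff_imp]
  exact G.ne_of_adj

theorem localComp_eq_self_of_forall_not_adj {G : SimpleGraph V} {c : V} (h : ∀ x, ¬G.Adj c x) :
    G ⋆ c = G := by
  ext x y
  exact localComp_adj_of_not_adj (h x) y

theorem localComp_localComp_self (G : SimpleGraph V) (v : V) : G ⋆ v ⋆ v = G := by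
  ext x y
  simp only [localComp_adj]
  grind [G.irrefl, G.adj_comm]

theorem localComp_comm {G : SimpleGraph V} {v w : V} (h : ¬G.Adj v w) :
    G ⋆ v ⋆ w = G ⋆ w ⋆ v := by
  ext x y
  simp only [localComp_adj]
  grind [G.irrefl, G.adj_comm]

theorem deleteIncidenceSet_localComp (G : SimpleGraph V) {v w : V} (hw : w ≠ v) :
    (G ⋆ w).deleteIncidenceSet v = G.deleteIncidenceSet v ⋆ w := by
  ext x y
  simp only [deleteIncidenceSet_adj, localComp_adj]
  grind

theorem deleteIncidenceSet_adj_of_ne (G : SimpleGraph V) {v x y : V} (hx : x ≠ v) (hy : y ≠ v) :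
    (G.deleteIncidenceSet v).Adj x y ↔ G.Adj x y := by
  simp [deleteIncidenceSet_adj, hx, hy]

theorem comap_localComp {V' : Type} (e : V ↪ V') (G : SimpleGraph V') (x : V) :
    (G ⋆ e x).comap e = G.comap e ⋆ x := by
  ext a b
  simp only [comap_adj, localComp_adj, ne_eq, e.injective.eq_iff]

/-- The pivot `G ∧ uv`. -/
def pivot (G : SimpleGraph V) (u v : V) : SimpleGraph V := G ⋆ u ⋆ v ⋆ u

theorem pivot_comm {G : SimpleGraph V} {u v : V} (h : G.Adj u v) :
    pivot G u v = pivot G v u := by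
  ext x y
  simp only [pivot, localComp_adj]
  grind (splits := 40) [G.irrefl, G.adj_comm]

theorem pivot_localComp (G : SimpleGraph V) (u v : V) : pivot G u v ⋆ u = G ⋆ u ⋆ v :=
  localComp_localComp_self _ u

theorem deleteIncidenceSet_pivot (G : SimpleGraph V) {u v w : V} (hu : u ≠ v) (hw : w ≠ v) :
    (pivot G u w).deleteIncidenceSet v = pivot (G.deleteIncidenceSet v) u w := by
  simp only [pivot, deleteIncidenceSet_localComp _ hu, deleteIncidenceSet_localComp _ hw]

theorem localComp_localComp_adj_of_not_adj {G : SimpleGraph V} {v w x y : V} (hvw : G.Adj v w)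
    (hx : ¬G.Adj w x) (hy : ¬G.Adj w y) (hxw : x ≠ w) (hyw : y ≠ w) :
    (G ⋆ v ⋆ w).Adj x y ↔ G.Adj x y := by
  simp only [localComp_adj]
  grind [G.irrefl, G.adj_comm]

theorem pivot_adj_of_not_adj {G : SimpleGraph V} {u v x y : V} (huv : G.Adj u v)
    (hx : ¬G.Adj u x) (hy : ¬G.Adj u y) (hxu : x ≠ u) (hyu : y ≠ u) (hxv : x ≠ v)
    (hyv : y ≠ v) :
    (pivot G u v).Adj x y ↔ G.Adj x y := by
  simp only [pivot, localComp_adj]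
  grind [G.irrefl, G.adj_comm]

theorem pivot_pivot_adj_of_not_adj {G : SimpleGraph V} {u v w x y : V} (huv : G.Adj u v)
    (hvw : G.Adj v w) (huw : u ≠ w) (hx : ¬G.Adj w x) (hy : ¬G.Adj w y) (hxu : x ≠ u)
    (hyu : y ≠ u) (hxv : x ≠ v) (hyv : y ≠ v) (hxw : x ≠ w) (hyw : y ≠ w) :
    (pivot (pivot G u v) u w).Adj x y ↔ G.Adj x y := by
  simp only [pivot, localComp_adj]
  grind (splits := 100) [G.irrefl, G.adj_comm]

end LocalComplementation

section LocalEquivalence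

variable {A B C : SimpleGraph V}

theorem LocEquiv.refl (A : SimpleGraph V) : LocEquiv A A := Relation.ReflTransGen.refl

theorem LocEquiv.trans (h₁ : LocEquiv A B) (h₂ : LocEquiv B C) : LocEquiv A C :=
  Relation.ReflTransGen.trans h₁ h₂

theorem LocEquiv.localComp_right (h : LocEquiv A B) (w : V) : LocEquiv A (B ⋆ w) :=
  h.tail ⟨w, rfl⟩

theorem locEquiv_localComp (A : SimpleGraph V) (w : V) : LocEquiv A (A ⋆ w) :=
  (LocEquiv.refl A).localComp_right w

theorem locEquiv_pivot (A : SimpleGraph V) (u w : V) : LocEquiv A (pivot A u w) :=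
  ((locEquiv_localComp A u).localComp_right w).localComp_right u

theorem LocEquiv.symm (h : LocEquiv A B) : LocEquiv B A := by
  induction h with
  | refl => exact .refl _
  | @tail D _ _ hD ih =>
    obtain ⟨w, rfl⟩ := hD
    have h := locEquiv_localComp (D ⋆ w) w
    rw [localComp_localComp_self] at h
    exact h.trans ih

theorem LocEquiv.forall_not_adj (h : LocEquiv A B) {c : V} (hc : ∀ x, ¬A.Adj c x) (x : V) :
    ¬B.Adj c x := by
  induction h generalizing x with
  | refl => exact hc x
  | tail _ hBC ih =>
    obtain ⟨w, rfl⟩ := hBC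
    rw [localComp_adj_of_not_adj (fun hwc => ih w hwc.symm)]
    exact ih x

theorem LocEquiv.comap {V' : Type} (e : V ↪ V') {A B : SimpleGraph V'} (h : LocEquiv A B)
    (hA : ∀ c ∉ Set.range e, ∀ x, ¬A.Adj c x) : LocEquiv (A.comap e) (B.comap e) := by
  induction h with
  | refl => exact .refl _
  | @tail B _ hAB hBC ih =>
    obtain ⟨c, rfl⟩ := hBC
    by_cases hc : c ∈ Set.range e
    · obtain ⟨x, rfl⟩ := hc
      rw [comap_localComp]
      exact ih.localComp_right x
    · rwa [localComp_eq_self_of_forall_not_adj (LocEquiv.forall_not_adj hAB (hA c hc))]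

theorem LocEquiv.exists_comap_eq {V' : Type} (e : V ↪ V') {G G' : SimpleGraph V}
    (h : LocEquiv G G') (A : SimpleGraph V') (hA : A.comap e = G) :
    ∃ A', LocEquiv A A' ∧ A'.comap e = G' := by
  induction h with
  | refl => exact ⟨A, .refl A, hA⟩
  | tail _ hBC ih =>
    obtain ⟨x, rfl⟩ := hBC
    obtain ⟨A', hAA', rfl⟩ := ih
    exact ⟨A' ⋆ e x, hAA'.localComp_right _, comap_localComp e A' x⟩

end LocalEquivalence

section Bouchet

def vertexDeletions (X : SimpleGraph V) (v : V) : Set (SimpleGraph V) :=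
  {T | T = X.deleteIncidenceSet v ∨ T = (X ⋆ v).deleteIncidenceSet v ∨
    ∃ u, X.Adj v u ∧ T = (pivot X u v).deleteIncidenceSet v}

variable {K : SimpleGraph V} {u v w : V} {T : SimpleGraph V}

theorem deleteIncidenceSet_mem_vertexDeletions (K : SimpleGraph V) (v : V) :
    K.deleteIncidenceSet v ∈ vertexDeletions K v :=
  Or.inl rfl

theorem localComp_deleteIncidenceSet_mem_vertexDeletions (K : SimpleGraph V) (v : V) :
    (K ⋆ v).deleteIncidenceSet v ∈ vertexDeletions K v :=
  Or.inr (Or.inl rfl)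

theorem pivot_deleteIncidenceSet_mem_vertexDeletions (h : K.Adj v u) :
    (pivot K u v).deleteIncidenceSet v ∈ vertexDeletions K v :=
  Or.inr (Or.inr ⟨u, h, rfl⟩)

theorem exists_mem_vertexDeletions_localComp_self (hT : T ∈ vertexDeletions (K ⋆ v) v) :
    ∃ T₀ ∈ vertexDeletions K v, LocEquiv T₀ T := by
  rcases hT with rfl | rfl | ⟨u, hvu, rfl⟩
  · exact ⟨_, localComp_deleteIncidenceSet_mem_vertexDeletions K v, .refl _⟩
  · rw [localComp_localComp_self]
    exact ⟨_, deleteIncidenceSet_mem_vertexDeletions K v, .refl _⟩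
  · rw [localComp_adj_of_not_adj (K.irrefl)] at hvu
    refine ⟨_, pivot_deleteIncidenceSet_mem_vertexDeletions hvu, ?_⟩
    change LocEquiv _ ((pivot K v u ⋆ u).deleteIncidenceSet v)
    rw [pivot_comm hvu, deleteIncidenceSet_localComp _ hvu.ne']
    exact locEquiv_localComp _ u

theorem exists_mem_vertexDeletions_localComp_of_adj (hvw : K.Adj v w)
    (hT : T ∈ vertexDeletions (K ⋆ w) v) :
    ∃ T₀ ∈ vertexDeletions K v, LocEquiv T₀ T := by
  have hwv : w ≠ v := hvw.ne'
  rcases hT with rfl | rfl | ⟨u, hvu, rfl⟩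
  · rw [deleteIncidenceSet_localComp _ hwv]
    exact ⟨_, deleteIncidenceSet_mem_vertexDeletions K v, locEquiv_localComp _ w⟩
  · rw [← pivot_localComp, deleteIncidenceSet_localComp _ hwv]
    exact ⟨_, pivot_deleteIncidenceSet_mem_vertexDeletions hvw, locEquiv_localComp _ w⟩
  · refine ⟨_, localComp_deleteIncidenceSet_mem_vertexDeletions K v, ?_⟩
    by_cases huw : u = w
    · subst huw
      change LocEquiv _ ((K ⋆ u ⋆ u ⋆ v ⋆ u).deleteIncidenceSet v)
      rw [localComp_localComp_self, deleteIncidenceSet_localComp _ hwv]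
      exact locEquiv_localComp _ u
    · have key : (pivot (K ⋆ w) u v).deleteIncidenceSet v =
          (K ⋆ v ⋆ u ⋆ w).deleteIncidenceSet v := by
        ext x y
        simp only [localComp_adj] at hvu
        simp only [deleteIncidenceSet_adj, pivot, localComp_adj]
        grind (splits := 100) [K.irrefl, K.adj_comm]
      rw [key, deleteIncidenceSet_localComp _ hwv, deleteIncidenceSet_localComp _ hvu.ne']
      exact (locEquiv_localComp _ u).localComp_right w

theorem exists_mem_vertexDeletions_localComp_of_not_adj (hvw : ¬K.Adj v w) (hwv : w ≠ v)
    (hT : T ∈ vertexDeletions (K ⋆ w) v) :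
    ∃ T₀ ∈ vertexDeletions K v, LocEquiv T₀ T := by
  rcases hT with rfl | rfl | ⟨u, hvu, rfl⟩
  · rw [deleteIncidenceSet_localComp _ hwv]
    exact ⟨_, deleteIncidenceSet_mem_vertexDeletions K v, locEquiv_localComp _ w⟩
  · rw [← localComp_comm hvw, deleteIncidenceSet_localComp _ hwv]
    exact ⟨_, localComp_deleteIncidenceSet_mem_vertexDeletions K v, locEquiv_localComp _ w⟩
  · rw [localComp_adj_of_not_adj (fun h => hvw h.symm)] at hvu
    refine ⟨_, pivot_deleteIncidenceSet_mem_vertexDeletions hvu, ?_⟩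
    by_cases huw : K.Adj u w
    · have key : (pivot (K ⋆ w) u v).deleteIncidenceSet v =
          (pivot K u v ⋆ u ⋆ w).deleteIncidenceSet v := by
        ext x y
        simp only [deleteIncidenceSet_adj, pivot, localComp_adj]
        grind (splits := 100) [K.irrefl, K.adj_comm]
      rw [key, deleteIncidenceSet_localComp _ hwv, deleteIncidenceSet_localComp _ hvu.ne']
      exact (locEquiv_localComp _ u).localComp_right w
    · have key : (pivot (K ⋆ w) u v).deleteIncidenceSet v =
          (pivot K u v ⋆ w).deleteIncidenceSet v := by
        ext x y
        simp only [deleteIncidenceSet_adj, pivot, localComp_adj]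
        grind (splits := 100) [K.irrefl, K.adj_comm]
      rw [key, deleteIncidenceSet_localComp _ hwv]
      exact locEquiv_localComp _ w

theorem exists_mem_vertexDeletions_localComp (hT : T ∈ vertexDeletions (K ⋆ w) v) :
    ∃ T₀ ∈ vertexDeletions K v, LocEquiv T₀ T := by
  by_cases hwv : w = v
  · subst hwv
    exact exists_mem_vertexDeletions_localComp_self hT
  by_cases hvw : K.Adj v w
  · exact exists_mem_vertexDeletions_localComp_of_adj hvw hT
  · exact exists_mem_vertexDeletions_localComp_of_not_adj hvw hwv hT

theorem LocEquiv.exists_mem_vertexDeletions {X : SimpleGraph V} (h : LocEquiv X K)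
    (hT : T ∈ vertexDeletions K v) : ∃ S ∈ vertexDeletions X v, LocEquiv S T := by
  induction h generalizing T with
  | refl => exact ⟨T, hT, .refl T⟩
  | tail _ hKK' ih =>
    obtain ⟨w, rfl⟩ := hKK'
    obtain ⟨T₀, hT₀, hT₀T⟩ := exists_mem_vertexDeletions_localComp hT
    obtain ⟨S, hS, hST₀⟩ := ih hT₀
    exact ⟨S, hS, hST₀.trans hT₀T⟩

end Bouchet

section Copies

variable {ι : Type*} {H : SimpleGraph W} {X Y : SimpleGraph V} {f : ι × W ↪ V} {I : Finset ι}
  {v : V}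

def InducesCopies (Y : SimpleGraph V) (H : SimpleGraph W) (f : ι × W ↪ V) (I : Finset ι) :
    Prop :=
  ∀ p q : ι × W, p.1 ∈ I → q.1 ∈ I → (Y.Adj (f p) (f q) ↔ p.1 = q.1 ∧ H.Adj p.2 q.2)

theorem InducesCopies.not_adj (h : InducesCopies Y H f I) {p q : ι × W} (hp : p.1 ∈ I)
    (hq : q.1 ∈ I) (hpq : p.1 ≠ q.1) : ¬Y.Adj (f p) (f q) :=
  fun hadj => hpq ((h p q hp hq).1 hadj).1

theorem InducesCopies.of_adj_iff {Y' : SimpleGraph V} {I' : Finset ι}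
    (h : InducesCopies Y H f I) (hI : I' ⊆ I)
    (hY' : ∀ p q, p.1 ∈ I' → q.1 ∈ I' → f p ≠ f q →
      (Y'.Adj (f p) (f q) ↔ Y.Adj (f p) (f q))) :
    InducesCopies Y' H f I' := by
  intro p q hp hq
  by_cases hpq : f p = f q
  · obtain rfl := f.injective hpq
    simp only [Y'.irrefl, H.irrefl, and_false]
  · rw [hY' p q hp hq hpq]
    exact h p q (hI hp) (hI hq)

theorem InducesCopies.deleteIncidenceSet (h : InducesCopies X H f I) (hv : ∀ p, f p ≠ v) :
    InducesCopies (X.deleteIncidenceSet v) H f I :=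
  h.of_adj_iff subset_rfl fun p q _ _ _ => deleteIncidenceSet_adj_of_ne X (hv p) (hv q)

theorem InducesCopies.erase [DecidableEq ι] (h : InducesCopies X H f I) {p₀ : ι × W}
    (hp₀ : p₀.1 ∈ I)
    (hY : ∀ p q, p.1 ∈ I → q.1 ∈ I → f p ≠ f q → f p ≠ f p₀ → f q ≠ f p₀ →
      ¬X.Adj (f p₀) (f p) → ¬X.Adj (f p₀) (f q) →
      (Y.Adj (f p) (f q) ↔ X.Adj (f p) (f q))) :
    InducesCopies Y H f (I.erase p₀.1) := by
  refine h.of_adj_iff (erase_subset _ _) fun p q hp hq hpq => ?_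
  obtain ⟨hp₀p, hpI⟩ := mem_erase.1 hp
  obtain ⟨hp₀q, hqI⟩ := mem_erase.1 hq
  exact hY p q hpI hqI hpq (f.injective.ne fun h => hp₀p (congrArg Prod.fst h))
    (f.injective.ne fun h => hp₀q (congrArg Prod.fst h))
    (h.not_adj hp₀ hpI (Ne.symm hp₀p)) (h.not_adj hp₀ hqI (Ne.symm hp₀q))

theorem InducesCopies.exists_localComp_deleteIncidenceSet (h : InducesCopies X H f I)
    (hv : ∀ p, f p ≠ v) :
    ∃ Y I', LocEquiv ((X ⋆ v).deleteIncidenceSet v) Y ∧ #I ≤ #I' + 1 ∧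
      InducesCopies Y H f I' := by
  classical
  by_cases hN : ∃ p₀, p₀.1 ∈ I ∧ X.Adj v (f p₀)
  · obtain ⟨p₀, hp₀, hvw⟩ := hN
    refine ⟨(X ⋆ v ⋆ f p₀).deleteIncidenceSet v, I.erase p₀.1, ?_,
      (card_erase_add_one hp₀).ge, h.erase hp₀ fun p q _ _ _ hpw hqw hp hq => ?_⟩
    · rw [deleteIncidenceSet_localComp _ (hv p₀)]
      exact locEquiv_localComp _ _
    · rw [deleteIncidenceSet_adj_of_ne _ (hv p) (hv q)]
      exact localComp_localComp_adj_of_not_adj hvw hp hq hpw hqw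
  · push Not at hN
    refine ⟨_, I, .refl _, le_add_right le_rfl, h.of_adj_iff subset_rfl fun p q hp _ _ => ?_⟩
    rw [deleteIncidenceSet_adj_of_ne _ (hv p) (hv q), localComp_adj_of_not_adj (hN p hp)]

theorem InducesCopies.exists_pivot_deleteIncidenceSet (h : InducesCopies X H f I)
    (hv : ∀ p, f p ≠ v) {u : V} (hvu : X.Adj v u) :
    ∃ Y I', LocEquiv ((pivot X u v).deleteIncidenceSet v) Y ∧ #I ≤ #I' + 1 ∧
      InducesCopies Y H f I' := by
  classical
  by_cases hU : ∃ p₀, p₀.1 ∈ I ∧ f p₀ = u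
  · obtain ⟨p₀, hp₀, rfl⟩ := hU
    refine ⟨_, I.erase p₀.1, .refl _, (card_erase_add_one hp₀).ge,
      h.erase hp₀ fun p q _ _ _ hpu hqu hp hq => ?_⟩
    rw [deleteIncidenceSet_adj_of_ne _ (hv p) (hv q)]
    exact pivot_adj_of_not_adj hvu.symm hp hq hpu hqu (hv p) (hv q)
  push Not at hU
  by_cases hN : ∃ p₀, p₀.1 ∈ I ∧ X.Adj v (f p₀)
  · obtain ⟨p₀, hp₀, hvw⟩ := hN
    refine ⟨(pivot (pivot X u v) u (f p₀)).deleteIncidenceSet v, I.erase p₀.1, ?_,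
      (card_erase_add_one hp₀).ge, h.erase hp₀ fun p q hpI hqI _ hpw hqw hp hq => ?_⟩
    · rw [deleteIncidenceSet_pivot _ hvu.ne' (hv p₀)]
      exact locEquiv_pivot _ _ _
    · rw [deleteIncidenceSet_adj_of_ne _ (hv p) (hv q)]
      exact pivot_pivot_adj_of_not_adj hvu.symm hvw (hU p₀ hp₀).symm hp hq (hU p hpI)
        (hU q hqI) (hv p) (hv q) hpw hqw
  · push Not at hN
    refine ⟨_, I, .refl _, le_add_right le_rfl, h.of_adj_iff subset_rfl fun p q hp hq _ => ?_⟩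
    rw [deleteIncidenceSet_adj_of_ne _ (hv p) (hv q), pivot_comm hvu.symm]
    exact pivot_adj_of_not_adj hvu (hN p hp) (hN q hq) (hv p) (hv q) (hU p hp) (hU q hq)

theorem InducesCopies.exists_of_mem_vertexDeletions (h : InducesCopies X H f I)
    (hv : ∀ p, f p ≠ v) {T : SimpleGraph V} (hT : T ∈ vertexDeletions X v) :
    ∃ Y I', LocEquiv T Y ∧ #I ≤ #I' + 1 ∧ InducesCopies Y H f I' := by
  rcases hT with rfl | rfl | ⟨u, hvu, rfl⟩
  · exact ⟨_, I, .refl _, le_add_right le_rfl, h.deleteIncidenceSet hv⟩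
  · exact h.exists_localComp_deleteIncidenceSet hv
  · exact h.exists_pivot_deleteIncidenceSet hv hvu

end Copies

section Deletion

def deleteIncidenceSets (G : SimpleGraph V) (S : Set V) : SimpleGraph V where
  Adj x y := G.Adj x y ∧ x ∉ S ∧ y ∉ S
  symm := ⟨fun _ _ h => ⟨h.1.symm, h.2.2, h.2.1⟩⟩
  loopless := ⟨fun x h => G.loopless.irrefl x h.1⟩

theorem deleteIncidenceSets_empty (G : SimpleGraph V) : deleteIncidenceSets G ∅ = G := by
  ext x y
  simp [deleteIncidenceSets]

theorem deleteIncidenceSets_insert (G : SimpleGraph V) (a : V) (S : Set V) :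
    deleteIncidenceSets G (insert a S) = (deleteIncidenceSets G S).deleteIncidenceSet a := by
  ext x y
  simp only [deleteIncidenceSets, deleteIncidenceSet_adj, Set.mem_insert_iff]
  tauto

variable {ι : Type*} {H : SimpleGraph W}

theorem LocEquiv.exists_inducesCopies_deleteIncidenceSets {X Y : SimpleGraph V}
    (hXY : LocEquiv X Y) {f : ι × W ↪ V} {I : Finset ι} (hY : InducesCopies Y H f I)
    (S : Finset V) (hS : ∀ p, f p ∉ S) :
    ∃ Y' I', LocEquiv (deleteIncidenceSets X S) Y' ∧ #I ≤ #I' + #S ∧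
      InducesCopies Y' H f I' := by
  classical
  induction S using Finset.induction_on with
  | empty => exact ⟨Y, I, by simpa [deleteIncidenceSets_empty] using hXY, by simp, hY⟩
  | @insert a S ha ih =>
    obtain ⟨Y₁, I₁, hXY₁, hI₁, hY₁⟩ := ih fun p hp => hS p (mem_insert_of_mem hp)
    have hT : (deleteIncidenceSets X S).deleteIncidenceSet a ∈
        vertexDeletions (deleteIncidenceSets X S) a :=
      deleteIncidenceSet_mem_vertexDeletions _ a
    obtain ⟨T₀, hT₀, hT₀T⟩ := hXY₁.symm.exists_mem_vertexDeletions hT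
    obtain ⟨Y₂, I₂, hT₀Y₂, hI₂, hY₂⟩ :=
      hY₁.exists_of_mem_vertexDeletions (fun p hp => hS p (hp ▸ mem_insert_self a S)) hT₀
    refine ⟨Y₂, I₂, ?_, ?_, hY₂⟩
    · rw [coe_insert, deleteIncidenceSets_insert]
      exact hT₀T.symm.trans hT₀Y₂
    · rw [card_insert_of_notMem ha]
      omega

theorem hasVertexMinor_of_inducesCopies {G Y : SimpleGraph V} (hGY : LocEquiv G Y)
    {f : ι × W ↪ V} {I : Finset ι} (hY : InducesCopies Y H f I) {i : ι} (hi : i ∈ I) :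
    HasVertexMinor G H :=
  ⟨(Embedding.sectR i W).trans f, Y, hGY, fun x y => by
    simpa using (hY (i, x) (i, y) hi hi).symm⟩

end Deletion

theorem no_large_packing_of_perturbation_general {V W : Type}
    (H : SimpleGraph W) (t : ℕ) (G Gt : SimpleGraph V)
    (hpert : IsPerturbation t Gt G) (hno : ¬ HasVertexMinor Gt H) :
    ¬ HasVertexMinor G (copies (t + 1) H) := by
  rintro ⟨f, G', hGG', hG'⟩
  obtain ⟨Gbig, ⟨B₁, hB₁, hGt⟩, ⟨B₂, hB₂, hG⟩⟩ := hpert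
  obtain ⟨B₂', hB₂', rfl⟩ :=
    hGG'.exists_comap_eq Embedding.inl B₂ (by ext; exact (hG _ _).symm)
  have hcopies : InducesCopies B₂' H (f.trans Embedding.inl) univ :=
    fun p q _ _ => (hG' p q).symm
  obtain ⟨Y, I, hY, hI, hYI⟩ :=
    (hB₁.symm.trans (hB₂.trans hB₂')).exists_inducesCopies_deleteIncidenceSets hcopies
      (univ.map Embedding.inr) (by simp)
  obtain ⟨i, hi⟩ : I.Nonempty := by
    rw [← card_pos]
    simp only [card_univ, Fintype.card_fin, card_map] at hI
    omega
  have hGtY : LocEquiv Gt (Y.comap Embedding.inl) := by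
    convert hY.comap Embedding.inl ?_
    · ext
      simp [deleteIncidenceSets, hGt]
    · rintro (c | j) hc x
      · exact absurd ⟨c, rfl⟩ hc
      · simp [deleteIncidenceSets]
  have hYI' : InducesCopies (Y.comap Embedding.inl) H f I := hYI
  exact hno (hasVertexMinor_of_inducesCopies hGtY hYI' hi)

/-- If a graph `G` has a `t`-perturbation `G~` with no vertex-minor
isomorphic to `H`, then `G` has no vertex-minor isomorphic to `(t+1)H`. -/
theorem no_large_packing_of_perturbation {V W : Type} [Fintype V] [Fintype W]
    (H : SimpleGraph W) (t : ℕ) (G Gt : SimpleGraph V)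
    (hpert : IsPerturbation t Gt G) (hno : ¬ HasVertexMinor Gt H) :
    ¬ HasVertexMinor G (copies (t + 1) H) :=
  no_large_packing_of_perturbation_general H t G Gt hpert hno

end EP
end

section
/- Let T be a tree, let k and m be positive integers, and let R1, R2, ..., Rm be pairwise disjoint sets of vertices of T such that |Ri| > (mk-1)^2 for each i in [m]. Then there exist a subtree T' of T and sets R1', R2', ..., Rm' such that for each i in [m], Ri' is a subset of Ri intersected with V(T'), |Ri'| = k, and each vertex in Ri' has degree at most m^2 + 1 in T'. -/
/-!
Take a vertex set `s`, minimal under inclusion, that induces a subtree of `T` meeting every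
`R i` in at least `K = max k (2k - 2)` vertices (the whole tree qualifies, as
`K ≤ (mk - 1)² + 1`). Deleting a leaf keeps the subtree connected, so by minimality every leaf
lies in some `R i` that the subtree meets in exactly `K` vertices: there are at most `mK`
leaves. A tree has `2 + ∑ (deg v - 2)` leaves, the sum running over the vertices of degree at
least three, so fewer than `K / m` vertices have degree above `m² + 1`, and each `R i` keeps
at least `k` vertices of small degree. For `m = 1` this count is too weak, but then all leaves
lie in `R 1` and have degree one.
-/

open Finset

lemma Finset.mul_card_filter_add_two_le_card_filter_eq_one {α : Type*} {s : Finset α}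
    {f : α → ℕ} (hf : ∀ a ∈ s, 1 ≤ f a) (hsum : ∑ a ∈ s, f a + 2 = 2 * #s) (d : ℕ) :
    d * #{a ∈ s | d + 2 ≤ f a} + 2 ≤ #{a ∈ s | f a = 1} := by
  have hpoint : ∀ a ∈ s,
      2 + d * (if d + 2 ≤ f a then 1 else 0) ≤ f a + (if f a = 1 then 1 else 0) := by
    intro a ha
    have := hf a ha
    split_ifs <;> omega
  have := sum_le_sum hpoint
  simp only [sum_add_distrib, ← mul_sum, sum_boole, sum_const, smul_eq_mul] at this
  push_cast at this
  omega

namespace SimpleGraph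

variable {V : Type*} {G : SimpleGraph V}

variable (G) in
noncomputable def degreeIn (s : Set V) (v : V) : ℕ := {u | u ∈ s ∧ G.Adj v u}.ncard

lemma degree_induce_eq_degreeIn {s : Set V} (v : s) [Fintype ((G.induce s).neighborSet v)] :
    (G.induce s).degree v = G.degreeIn s v := by
  have himg : {u | u ∈ s ∧ G.Adj v u} = Subtype.val '' (G.induce s).neighborSet v := by
    ext u
    exact ⟨fun ⟨hu, hadj⟩ => ⟨⟨u, hu⟩, hadj, rfl⟩, by rintro ⟨u, hu, rfl⟩; exact ⟨u.2, hu⟩⟩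
  rw [degreeIn, himg, Set.ncard_image_of_injective _ Subtype.val_injective,
    Set.ncard_eq_toFinset_card', ← card_neighborFinset_eq_degree]
  rfl

lemma degreeIn_le_ncard [Finite V] (s : Set V) (v : V) : G.degreeIn s v ≤ s.ncard :=
  Set.ncard_le_ncard fun _ hu => hu.1

lemma Connected.one_le_degreeIn [Finite V] {s : Set V} (hs : (G.induce s).Connected)
    (hnt : s.Nontrivial) {v : V} (hv : v ∈ s) : 1 ≤ G.degreeIn s v := by
  have := hnt.coe_sort
  have := Fintype.ofFinite ((G.induce s).neighborSet ⟨v, hv⟩)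
  rw [← degree_induce_eq_degreeIn ⟨v, hv⟩]
  exact hs.preconnected.degree_pos_of_nontrivial _

lemma Connected.induce_diff_singleton_of_degreeIn_eq_one [Finite V] {s : Set V}
    (hs : (G.induce s).Connected) {v : V} (hv : v ∈ s) (hdeg : G.degreeIn s v = 1) :
    (G.induce (s \ {v})).Connected := by
  have := Fintype.ofFinite ((G.induce s).neighborSet ⟨v, hv⟩)
  have h := hs.induce_compl_singleton_of_degree_eq_one (v := ⟨v, hv⟩)
    (by rw [degree_induce_eq_degreeIn, hdeg])
  refine h.map ⟨fun w => ⟨w.1.1, w.1.2, fun hw => w.2 (Subtype.ext hw)⟩, fun h => h⟩ ?_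
  rintro ⟨w, hws, hwv⟩
  exact ⟨⟨⟨w, hws⟩, fun h => hwv (congrArg Subtype.val h)⟩, rfl⟩

lemma IsAcyclic.sum_degreeIn_add_two (hG : G.IsAcyclic) {s : Finset V}
    (hs : (G.induce (s : Set V)).Connected) : ∑ v ∈ s, G.degreeIn s v + 2 = 2 * #s := by
  classical
  have hsum : ∑ v : (s : Set V), (G.induce (s : Set V)).degree v = ∑ v ∈ s, G.degreeIn s v := by
    simp only [degree_induce_eq_degreeIn]
    exact sum_coe_sort s _
  have hedges := IsTree.card_edgeFinset ⟨hs, hG.induce _⟩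
  rw [← Nat.card_eq_fintype_card, Nat.card_coe_set_eq, Set.ncard_coe_finset] at hedges
  have := (G.induce (s : Set V)).sum_degrees_eq_twice_card_edges
  omega

lemma IsAcyclic.mul_card_filter_add_two_le_card_leaves [Finite V] (hG : G.IsAcyclic)
    {s : Finset V} (hs : (G.induce (s : Set V)).Connected) (hnt : (s : Set V).Nontrivial)
    (d : ℕ) : d * #{v ∈ s | d + 2 ≤ G.degreeIn s v} + 2 ≤ #{v ∈ s | G.degreeIn s v = 1} :=
  mul_card_filter_add_two_le_card_filter_eq_one (fun _ hv => hs.one_le_degreeIn hnt hv)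
    (hG.sum_degreeIn_add_two hs) d

end SimpleGraph

namespace EP

open SimpleGraph

section IsRichSubtree

variable {V ι : Type*} (R : ι → Set V) [∀ i, DecidablePred (· ∈ R i)]

def IsRichSubtree (T : SimpleGraph V) (K : ℕ) (s : Finset V) : Prop :=
  (T.induce (s : Set V)).Connected ∧ ∀ i, K ≤ #{v ∈ s | v ∈ R i}

variable {R} [Finite V] [DecidableEq V] {T : SimpleGraph V} {K : ℕ} {s : Finset V}

lemma exists_tight_of_degreeIn_eq_one (hs : Minimal (IsRichSubtree R T K) s) {v : V}
    (hv : v ∈ s) (hleaf : T.degreeIn s v = 1) : ∃ i, v ∈ R i ∧ #{u ∈ s | u ∈ R i} = K := by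
  have hconn : (T.induce ((s.erase v : Finset V) : Set V)).Connected := by
    rw [coe_erase]
    exact hs.prop.1.induce_diff_singleton_of_degreeIn_eq_one hv hleaf
  obtain ⟨i, hi⟩ : ∃ i, #{u ∈ s.erase v | u ∈ R i} < K := by
    by_contra! h
    exact (hs.eq_of_le ⟨hconn, h⟩ (erase_subset v s) ▸ notMem_erase v s) hv
  have hK := hs.prop.2 i
  rw [filter_erase] at hi
  by_cases hvi : v ∈ R i
  · rw [card_erase_of_mem (s := {u ∈ s | u ∈ R i}) (mem_filter.2 ⟨hv, hvi⟩)] at hi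
    exact ⟨i, hvi, by omega⟩
  · rw [erase_eq_of_notMem (s := {u ∈ s | u ∈ R i}) fun h => hvi (mem_filter.1 h).2] at hi
    omega

lemma card_leaves_le [Fintype ι] (hs : Minimal (IsRichSubtree R T K) s) :
    #{v ∈ s | T.degreeIn s v = 1} ≤ Fintype.card ι * K := by
  have hcover : {v ∈ s | T.degreeIn s v = 1} ⊆
      ({i | #{u ∈ s | u ∈ R i} = K} : Finset ι).biUnion fun i => {u ∈ s | u ∈ R i} := by
    intro v hv
    obtain ⟨hvs, hleaf⟩ := mem_filter.1 hv
    obtain ⟨i, hvi, htight⟩ := exists_tight_of_degreeIn_eq_one hs hvs hleaf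
    exact mem_biUnion.2 ⟨i, mem_filter.2 ⟨mem_univ i, htight⟩, mem_filter.2 ⟨hvs, hvi⟩⟩
  calc #{v ∈ s | T.degreeIn s v = 1}
      ≤ #({i | #{u ∈ s | u ∈ R i} = K} : Finset ι) * K :=
        (card_le_card hcover).trans <|
          card_biUnion_le_card_mul _ _ _ fun i hi => (mem_filter.1 hi).2.le
    _ ≤ Fintype.card ι * K := Nat.mul_le_mul_right _ (card_filter_le _ _)

lemma card_leaves_le_of_subsingleton [Subsingleton ι] (hs : Minimal (IsRichSubtree R T K) s)
    (i : ι) (d : ℕ) :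
    #{v ∈ s | T.degreeIn s v = 1} ≤ #{v ∈ s | v ∈ R i ∧ T.degreeIn s v ≤ d + 1} := by
  refine card_le_card fun v hv => ?_
  obtain ⟨hvs, hleaf⟩ := mem_filter.1 hv
  obtain ⟨j, hvj, -⟩ := exists_tight_of_degreeIn_eq_one hs hvs hleaf
  exact mem_filter.2 ⟨hvs, Subsingleton.elim j i ▸ hvj, by omega⟩

lemma le_card_filter_degreeIn_le [Fintype ι] (hT : T.IsAcyclic) {k : ℕ}
    (hs : Minimal (IsRichSubtree R T (max k (2 * k - 2))) s) (i : ι) :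
    k ≤ #{v ∈ s | v ∈ R i ∧ T.degreeIn s v ≤ Fintype.card ι ^ 2 + 1} := by
  set m := Fintype.card ι
  set K := max k (2 * k - 2)
  set B := #{v ∈ s | m ^ 2 + 2 ≤ T.degreeIn s v}
  set L := #{v ∈ s | T.degreeIn s v = 1}
  have hA : K ≤ #{v ∈ s | v ∈ R i} := hs.prop.2 i
  have hsplit : #{v ∈ s | v ∈ R i} ≤ #{v ∈ s | v ∈ R i ∧ T.degreeIn s v ≤ m ^ 2 + 1} + B := by
    refine (card_le_card fun v hv => ?_).trans (card_union_le _ _)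
    obtain ⟨hvs, hvi⟩ := mem_filter.1 hv
    by_cases hdeg : T.degreeIn s v ≤ m ^ 2 + 1
    · exact mem_union_left _ (mem_filter.2 ⟨hvs, hvi, hdeg⟩)
    · exact mem_union_right _ (mem_filter.2 ⟨hvs, by omega⟩)
  obtain hB | hB := Nat.eq_zero_or_pos B
  · omega
  obtain ⟨v, hv⟩ := card_pos.1 hB
  have hnt : (s : Set V).Nontrivial := by
    have := (mem_filter.1 hv).2.trans (degreeIn_le_ncard _ v)
    rw [← Set.one_lt_ncard_iff_nontrivial]
    omega
  have hLB : m ^ 2 * B + 2 ≤ L := hT.mul_card_filter_add_two_le_card_leaves hs.prop.1 hnt _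
  have hLK : L ≤ m * K := card_leaves_le hs
  have hmB : m * B < K := Nat.lt_of_mul_lt_mul_left (a := m) (by rw [← mul_assoc, ← sq]; omega)
  obtain hm1 | hm2 : m = 1 ∨ 2 ≤ m := by
    have : 0 < m := Fintype.card_pos_iff.2 ⟨i⟩
    omega
  · have := Fintype.card_le_one_iff_subsingleton.1 hm1.le
    have := card_leaves_le_of_subsingleton hs i (m ^ 2)
    have : L ≤ K := by simpa [hm1] using hLK
    have : B ≤ m ^ 2 * B := Nat.le_mul_of_pos_left _ (by positivity)
    omega
  · have := Nat.mul_le_mul_right B hm2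
    omega

end IsRichSubtree

lemma max_le_sq_sub_one_add_one {m k : ℕ} (hm : 1 ≤ m) :
    max k (2 * k - 2) ≤ (m * k - 1) ^ 2 + 1 := by
  have hk : k ≤ m * k := Nat.le_mul_of_pos_left k hm
  have := two_mul_le_add_sq (m * k - 1) 1
  omega

theorem subtree_selection_general {V : Type} [Fintype V] (T : SimpleGraph V) (hT : T.IsTree)
    (k m : ℕ) (R : Fin m → Set V)
    (hcard : ∀ i, (m * k - 1) ^ 2 < (R i).ncard) :
    ∃ S : Set V, (T.induce S).Connected ∧
      ∃ R' : Fin m → Set V, ∀ i : Fin m,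
        R' i ⊆ R i ∩ S ∧ (R' i).ncard = k ∧
        ∀ v ∈ R' i, {u | u ∈ S ∧ T.Adj v u}.ncard ≤ m ^ 2 + 1 := by
  classical
  have huniv : IsRichSubtree R T (max k (2 * k - 2)) univ := by
    refine ⟨by rw [coe_univ]; exact (induceUnivIso T).connected_iff.2 hT.connected, fun i => ?_⟩
    have hRi : (R i).ncard = #{v | v ∈ R i} := by
      rw [Set.ncard_eq_toFinset_card']
      congr 1
      ext
      simp
    have := hcard i
    have := max_le_sq_sub_one_add_one (k := k) i.pos
    omega
  obtain ⟨s, -, hs⟩ := exists_minimal_le_of_wellFoundedLT _ univ huniv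
  choose t hts htk using fun i =>
    exists_subset_card_eq (le_card_filter_degreeIn_le hT.isAcyclic hs i)
  refine ⟨s, hs.prop.1, fun i => t i, fun i => ⟨fun v hv => ?_, by simp [htk], fun v hv => ?_⟩⟩
  · obtain ⟨hvs, hvi, -⟩ := mem_filter.1 (hts i hv)
    exact ⟨hvi, hvs⟩
  · have hdeg := (mem_filter.1 (hts i hv)).2.2
    rwa [Fintype.card_fin] at hdeg

/-- Let `T` be a tree and `R 1, …, R m` pairwise disjoint sets of
vertices of `T`, each of size more than `(mk-1)^2`. Then there is a subtree `T'` of `T`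
(given by a set `S` of vertices inducing a connected subgraph) and sets `R' i ⊆ R i ∩ S`
of size `k` all of whose vertices have degree at most `m² + 1` in `T'`. -/
theorem subtree_selection {V : Type} [Fintype V] (T : SimpleGraph V) (hT : T.IsTree)
    (k m : ℕ) (hk : 0 < k) (hm : 0 < m) (R : Fin m → Set V)
    (hdisj : ∀ i j, i ≠ j → Disjoint (R i) (R j))
    (hcard : ∀ i, (m * k - 1) ^ 2 < (R i).ncard) :
    ∃ S : Set V, (T.induce S).Connected ∧
      ∃ R' : Fin m → Set V, ∀ i : Fin m,
        R' i ⊆ R i ∩ S ∧ (R' i).ncard = k ∧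
        ∀ v ∈ R' i, {u | u ∈ S ∧ T.Adj v u}.ncard ≤ m ^ 2 + 1 :=
  subtree_selection_general T hT k m R hcard

end EP
end
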